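/- If 1 ≤ D ≤ Σ_{k=0}^{K-1} N^{-k}, then (N−1)(D−1)/(N^K−N) ≤ (1−(N−1)(D−1))/N; consequently the distribution p* satisfies max_{m ∈ {1,…,N^K}} p*_m = (1−(N−1)(D−1))/N, i.e., the optimal solution for finite Rényi order α also attains the minimum of max_m p_m over feasible distributions (the order-∞ problem). -/

import Mathlib

open Finset Real

/-- Download cost of option `m` (0-indexed: options `1,…,N` of the paper are `m < N`)
in the symmetric TSC scheme with `N` databases and `K` messages. -/
noncomputable def tscCost (N m : ℕ) : ℝ := if m < N then (N : ℝ) - 1 else (N : ℝ)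

/-- `p` is a feasible query distribution for the symmetric TSC scheme with expected
normalized download cost `D`. -/
def TSCFeasible (N K : ℕ) (D : ℝ) (p : ℕ → ℝ) : Prop :=
  (∀ m ∈ Finset.range (N ^ K), 0 ≤ p m) ∧
  (∑ m ∈ Finset.range (N ^ K), p m = 1) ∧
  (1 / ((N : ℝ) - 1)) * (∑ m ∈ Finset.range (N ^ K), p m * tscCost N m) = D

/-- The optimal distribution `p*` for the symmetric TSC scheme. -/
noncomputable def tscOpt (N K : ℕ) (D : ℝ) (m : ℕ) : ℝ :=
  if m < N then (1 - ((N : ℝ) - 1) * (D - 1)) / N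
  else ((N : ℝ) - 1) * (D - 1) / ((N : ℝ) ^ K - (N : ℝ))

/-- Download cost of option `m` (0-indexed) in the alternative PIR scheme with
message length `L`. -/
noncomputable def altCost (N L m : ℕ) : ℝ := if m < N then (L : ℝ) else (L : ℝ) + 1

/-- `p` is a feasible query distribution for the alternative PIR scheme
(`M = N (L+1)^(K-1)` options) with expected normalized download cost `D`. -/
def AltFeasible (N K L : ℕ) (D : ℝ) (p : ℕ → ℝ) : Prop :=
  (∀ m ∈ Finset.range (N * (L + 1) ^ (K - 1)), 0 ≤ p m) ∧
  (∑ m ∈ Finset.range (N * (L + 1) ^ (K - 1)), p m = 1) ∧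
  (1 / (L : ℝ)) * (∑ m ∈ Finset.range (N * (L + 1) ^ (K - 1)), p m * altCost N L m) = D

/-- The optimal distribution `q*` for the alternative PIR scheme. -/
noncomputable def altOpt (N K L : ℕ) (D : ℝ) (m : ℕ) : ℝ :=
  if m < N then (1 - (L : ℝ) * (D - 1)) / N
  else (L : ℝ) * (D - 1) / ((N : ℝ) * ((L : ℝ) + 1) ^ (K - 1) - (N : ℝ))

/-- Rényi divergence of order `α` (`0 < α`, `α ≠ 1`) of a distribution `p` on `M`
options from the uniform distribution on those options (natural logarithm). -/
noncomputable def renyiDiv (M : ℕ) (α : ℝ) (p : ℕ → ℝ) : ℝ :=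
  (1 / (α - 1)) * Real.log ((M : ℝ) ^ (α - 1) * ∑ m ∈ Finset.range M, p m ^ α)

/-- Kullback–Leibler divergence of a distribution `p` on `M` options from the uniform
distribution on those options (natural logarithm, with `0 · log 0 = 0`). -/
noncomputable def klDivUnif (M : ℕ) (p : ℕ → ℝ) : ℝ :=
  ∑ m ∈ Finset.range M, p m * Real.log ((M : ℝ) * p m)

/-- The maximum of `p` over the `M` options. -/
noncomputable def maxOver (M : ℕ) (hM : M ≠ 0) (p : ℕ → ℝ) : ℝ :=
  (Finset.range M).sup' (Finset.nonempty_range_iff.mpr hM) p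

/-!
Write `a = (N - 1)(D - 1)`. Since the cost of option `m` is `N - [m < N]`, every feasible `p`
puts mass `N - (N - 1) D = 1 - a` on the first `N` options, so `max p ≥ (1 - a) / N`; and `p*`
spreads exactly this mass uniformly over them. That the remaining entries of `p*` are no larger
amounts to `a N^K ≤ N^K - N`, which is the bound `D ≤ ∑_{k<K} N^{-k}` once the geometric series
is summed.
-/

section GeomSum

variable {𝕜 : Type*} [Field 𝕜]

theorem sub_one_mul_sum_inv_pow_mul_pow {x : 𝕜} (hx : x ≠ 0) (K : ℕ) :
    (x - 1) * (∑ k ∈ range K, (x ^ k)⁻¹) * x ^ K = x * (x ^ K - 1) := by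
  induction K with
  | zero => simp
  | succ K ih =>
    have hinv : (x ^ K)⁻¹ * x ^ K = 1 := inv_mul_cancel₀ (pow_ne_zero K hx)
    rw [sum_range_succ, pow_succ]
    linear_combination x * ih + (x - 1) * x * hinv

theorem sub_one_mul_sub_one_mul_pow_le_of_le_sum_inv_pow [LinearOrder 𝕜] [IsStrictOrderedRing 𝕜]
    {x D : 𝕜} (hx : 1 ≤ x) {K : ℕ}
    (hD : D ≤ ∑ k ∈ range K, (x ^ k)⁻¹) :
    (x - 1) * (D - 1) * x ^ K ≤ x ^ K - x := by
  have hgeom := sub_one_mul_sum_inv_pow_mul_pow (by positivity : x ≠ 0) K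
  have hpos : 0 ≤ (x - 1) * x ^ K := mul_nonneg (by linarith) (by positivity)
  nlinarith

end GeomSum

theorem sum_range_ite_lt {R : Type*} [Ring R] {N M : ℕ} (h : N ≤ M) (a b : R) :
    ∑ m ∈ range M, (if m < N then a else b) = N * a + ((M : R) - N) * b := by
  rw [← sum_range_add_sum_Ico _ h, sum_congr rfl fun m hm => if_pos (mem_range.mp hm),
    sum_congr rfl fun m hm => if_neg (mem_Ico.mp hm).1.not_gt]
  simp [Nat.cast_sub h]

theorem sum_mul_tscCost {N M : ℕ} (h : N ≤ M) (p : ℕ → ℝ) :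
    ∑ m ∈ range M, p m * tscCost N m = N * ∑ m ∈ range M, p m - ∑ m ∈ range N, p m := by
  rw [← sum_range_add_sum_Ico _ h, ← sum_range_add_sum_Ico p h, mul_add]
  have hhead :
      ∑ m ∈ range N, p m * tscCost N m = N * ∑ m ∈ range N, p m - ∑ m ∈ range N, p m := by
    rw [mul_sum, ← sum_sub_distrib]
    exact sum_congr rfl fun m hm => by simp [tscCost, mem_range.mp hm]; ring
  have htail : ∑ m ∈ Ico N M, p m * tscCost N m = N * ∑ m ∈ Ico N M, p m := by
    rw [mul_sum]
    exact sum_congr rfl fun m hm => by simp [tscCost, (mem_Ico.mp hm).1.not_gt, mul_comm]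
  rw [hhead, htail]; ring

theorem sum_range_le_mul_maxOver {N M : ℕ} (h : N ≤ M) (hM : M ≠ 0) (p : ℕ → ℝ) :
    ∑ m ∈ range N, p m ≤ N * maxOver M hM p := by
  calc ∑ m ∈ range N, p m ≤ ∑ _m ∈ range N, maxOver M hM p :=
        sum_le_sum fun m hm => le_sup' p (mem_range.mpr ((mem_range.mp hm).trans_le h))
    _ = N * maxOver M hM p := by simp

section TSC

variable {N K : ℕ} {D : ℝ}

theorem tsc_tail_prob_le_head_prob (hN : 2 ≤ N) (hK : 2 ≤ K)
    (hD2 : D ≤ ∑ k ∈ range K, ((N : ℝ) ^ k)⁻¹) :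
    ((N : ℝ) - 1) * (D - 1) / ((N : ℝ) ^ K - N) ≤ (1 - ((N : ℝ) - 1) * (D - 1)) / N := by
  have hN1 : (1 : ℝ) < N := by exact_mod_cast hN
  have hNK : (N : ℝ) < N ^ K := lt_self_pow₀ hN1 hK
  have hbudget := sub_one_mul_sub_one_mul_pow_le_of_le_sum_inv_pow hN1.le hD2
  rw [div_le_div_iff₀ (by linarith) (by linarith)]
  linarith

theorem maxOver_tscOpt (hN : 2 ≤ N) (hK : 2 ≤ K) (hD2 : D ≤ ∑ k ∈ range K, ((N : ℝ) ^ k)⁻¹)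
    (hM : N ^ K ≠ 0) :
    maxOver (N ^ K) hM (tscOpt N K D) = (1 - ((N : ℝ) - 1) * (D - 1)) / N := by
  refine le_antisymm (sup'_le _ _ fun m _ => ?_) ?_
  · unfold tscOpt
    split_ifs
    exacts [le_rfl, tsc_tail_prob_le_head_prob hN hK hD2]
  · have h0 : 0 < N := by omega
    calc (1 - ((N : ℝ) - 1) * (D - 1)) / N = tscOpt N K D 0 := by simp [tscOpt, h0]
      _ ≤ maxOver (N ^ K) hM (tscOpt N K D) := le_sup' _ (mem_range.mpr (Nat.pos_of_ne_zero hM))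

theorem sum_range_tscOpt (hN : N ≠ 0) :
    ∑ m ∈ range N, tscOpt N K D m = 1 - ((N : ℝ) - 1) * (D - 1) := by
  unfold tscOpt
  rw [sum_congr rfl fun m hm => if_pos (mem_range.mp hm)]
  simp [field]

theorem tscFeasible_tscOpt (hN : 2 ≤ N) (hK : 2 ≤ K) (hD1 : 1 ≤ D)
    (hD2 : D ≤ ∑ k ∈ range K, ((N : ℝ) ^ k)⁻¹) :
    TSCFeasible N K D (tscOpt N K D) := by
  have hN1 : (1 : ℝ) < N := by exact_mod_cast hN
  have hNK : (N : ℝ) < N ^ K := lt_self_pow₀ hN1 hK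
  have hNKnat : N ≤ N ^ K := Nat.le_self_pow (by omega) N
  have hbudget := sub_one_mul_sub_one_mul_pow_le_of_le_sum_inv_pow hN1.le hD2
  have hN1ne : (N : ℝ) - 1 ≠ 0 := by linarith
  have hNKne : (N : ℝ) ^ K - N ≠ 0 := by linarith
  have ha0 : 0 ≤ ((N : ℝ) - 1) * (D - 1) := mul_nonneg (by linarith) (by linarith)
  have ha1 : ((N : ℝ) - 1) * (D - 1) ≤ 1 := by nlinarith
  have hsum : ∑ m ∈ range (N ^ K), tscOpt N K D m = 1 := by
    unfold tscOpt
    rw [sum_range_ite_lt hNKnat]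
    push_cast
    field_simp
    ring
  refine ⟨fun m _ => ?_, hsum, ?_⟩
  · unfold tscOpt
    split_ifs
    exacts [div_nonneg (by linarith) (by linarith), div_nonneg ha0 (by linarith)]
  · rw [sum_mul_tscCost hNKnat, hsum, sum_range_tscOpt (by omega)]
    field_simp
    ring

theorem sum_range_eq_of_tscFeasible {p : ℕ → ℝ} (hN : 2 ≤ N) (hK : K ≠ 0)
    (hp : TSCFeasible N K D p) :
    ∑ m ∈ range N, p m = 1 - ((N : ℝ) - 1) * (D - 1) := by
  obtain ⟨-, hsum, hcost⟩ := hp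
  have hN1 : (N : ℝ) - 1 ≠ 0 := by
    have : (2 : ℝ) ≤ N := by exact_mod_cast hN
    linarith
  rw [sum_mul_tscCost (Nat.le_self_pow hK N), hsum] at hcost
  field_simp at hcost
  linarith

end TSC

/-- if `1 ≤ D ≤ ∑_{k<K} N^{-k}`, then
`(N-1)(D-1)/(N^K-N) ≤ (1-(N-1)(D-1))/N`; consequently `p*` satisfies
`max_m p*ₘ = (1-(N-1)(D-1))/N` and also attains the minimum of `max_m pₘ` over
feasible distributions of the symmetric TSC scheme. -/
theorem tsc_opt_also_solves_infty (N K : ℕ) (hN : 2 ≤ N) (hK : 2 ≤ K) (D : ℝ)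
    (hD1 : 1 ≤ D) (hD2 : D ≤ ∑ k ∈ Finset.range K, ((N : ℝ) ^ k)⁻¹) :
    ((N : ℝ) - 1) * (D - 1) / ((N : ℝ) ^ K - N) ≤ (1 - ((N : ℝ) - 1) * (D - 1)) / N ∧
    maxOver (N ^ K) (pow_ne_zero K (show N ≠ 0 by omega)) (tscOpt N K D) =
      (1 - ((N : ℝ) - 1) * (D - 1)) / N ∧
    TSCFeasible N K D (tscOpt N K D) ∧
    ∀ p : ℕ → ℝ, TSCFeasible N K D p →
      maxOver (N ^ K) (pow_ne_zero K (show N ≠ 0 by omega)) (tscOpt N K D) ≤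
        maxOver (N ^ K) (pow_ne_zero K (show N ≠ 0 by omega)) p := by
  refine ⟨tsc_tail_prob_le_head_prob hN hK hD2, maxOver_tscOpt hN hK hD2 _,
    tscFeasible_tscOpt hN hK hD1 hD2, fun p hp => ?_⟩
  have hN0 : (0 : ℝ) < N := by exact_mod_cast (show 0 < N by omega)
  rw [maxOver_tscOpt hN hK hD2, div_le_iff₀' hN0,
    ← sum_range_eq_of_tscFeasible hN (by omega) hp]
  exact sum_range_le_mul_maxOver (Nat.le_self_pow (by omega) N) _ p
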